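/- Let k₀ > 0 and let ν, s ∈ ℝ³ be unit vectors. Set c = s − 2⟨ν, s⟩ν and assume c₃ ≠ 0. Define on the open disk D = {(k₁,k₂) : k₁² + k₂² < k₀²} the phase function Ψ(k₁,k₂) = ⟨k/k₀, s⟩ − 2⟨k/k₀, ν⟩⟨ν, s⟩, where k = k(k₁,k₂) = (k₁, k₂, −√(k₀² − k₁² − k₂²)). Then at the critical point (k₁*, k₂*) = −k₀·sign(c₃)·(c₁, c₂), the determinant of the Hessian matrix H(Ψ) of Ψ satisfies det(H(Ψ)(k₁*, k₂*)) = 1 / (c₃² k₀⁴); in particular it is strictly positive. -/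

import Mathlib

/-!
Substituting `c = s − 2⟨ν, s⟩ν` turns the phase into `Ψ(k) = ⟨k, c⟩ / k₀`, that is
`Ψ = (c₁k₁ + c₂k₂ − c₃ h) / k₀` with `h = √(k₀² − k₁² − k₂²)`. Its Hessian on the disk is
`(c₃ / (k₀ h)) (I + u uᵀ)` with `u = k / h`, so by the matrix determinant lemma
`det H = (c₃ / (k₀ h))² (1 + |k|² / h²) = c₃² / h⁴`. At the critical point `|c| = 1` gives
`h = k₀ |c₃|`, whence `det H = 1 / (c₃² k₀⁴)`.
-/

/-- The real dot product on ℝ³ (represented as `Fin 3 → ℝ`). -/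
noncomputable def dot3 (v w : Fin 3 → ℝ) : ℝ := ∑ i, v i * w i

/-- The two coordinate directions of ℝ². -/
noncomputable def e2 : Fin 2 → ℝ × ℝ := ![(1, 0), (0, 1)]

open Filter Topology

noncomputable def proj2 (j : Fin 2) : ℝ × ℝ →L[ℝ] ℝ :=
  ![ContinuousLinearMap.fst ℝ ℝ ℝ, ContinuousLinearMap.snd ℝ ℝ ℝ] j

lemma proj2_e2 (i j : Fin 2) : proj2 j (e2 i) = (1 : Matrix (Fin 2) (Fin 2) ℝ) i j := by
  fin_cases i <;> fin_cases j <;> simp [proj2, e2]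

noncomputable def dot2 (a : ℝ × ℝ) : ℝ × ℝ →L[ℝ] ℝ :=
  a.1 • ContinuousLinearMap.fst ℝ ℝ ℝ + a.2 • ContinuousLinearMap.snd ℝ ℝ ℝ

@[simp] lemma dot2_apply (a v : ℝ × ℝ) : dot2 a v = a.1 * v.1 + a.2 * v.2 := rfl

lemma dot2_e2 (a : ℝ × ℝ) (i : Fin 2) : dot2 a (e2 i) = proj2 i a := by
  fin_cases i <;> simp [proj2, e2]

noncomputable def hessian2 (f : ℝ × ℝ → ℝ) (x : ℝ × ℝ) : Matrix (Fin 2) (Fin 2) ℝ :=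
  Matrix.of fun i j => fderiv ℝ (fun y => fderiv ℝ f y (e2 j)) x (e2 i)

section

variable (k₀ : ℝ)

noncomputable def sphereHeight (y : ℝ × ℝ) : ℝ := √(k₀ ^ 2 - y.1 ^ 2 - y.2 ^ 2)

def disk : Set (ℝ × ℝ) := {y | 0 < k₀ ^ 2 - y.1 ^ 2 - y.2 ^ 2}

lemma isOpen_disk : IsOpen (disk k₀) := isOpen_lt continuous_const (by fun_prop)

noncomputable def phase (a : ℝ × ℝ) (b : ℝ) (y : ℝ × ℝ) : ℝ :=
  (dot2 a y - b * sphereHeight k₀ y) / k₀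

variable {k₀} {x : ℝ × ℝ}

lemma sphereHeight_pos (hx : x ∈ disk k₀) : 0 < sphereHeight k₀ x := Real.sqrt_pos.2 hx

lemma sphereHeight_sq (hx : x ∈ disk k₀) : sphereHeight k₀ x ^ 2 = k₀ ^ 2 - x.1 ^ 2 - x.2 ^ 2 :=
  Real.sq_sqrt hx.le

lemma hasFDerivAt_sphereHeight (hx : x ∈ disk k₀) :
    HasFDerivAt (sphereHeight k₀) (-(sphereHeight k₀ x)⁻¹ • dot2 x) x := by
  have hq :
      HasFDerivAt (fun y : ℝ × ℝ => k₀ ^ 2 - y.1 ^ 2 - y.2 ^ 2) (-2 • dot2 x) x := by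
    refine (((hasFDerivAt_const _ x).sub (hasFDerivAt_fst.pow 2)).sub
      (hasFDerivAt_snd.pow 2)).congr_fderiv ?_
    ext <;> simp
  refine (hq.sqrt hx.ne').congr_fderiv ?_
  ext <;> simp [sphereHeight] <;> field_simp

lemma hasFDerivAt_phase (a : ℝ × ℝ) (b : ℝ) (hx : x ∈ disk k₀) :
    HasFDerivAt (phase k₀ a b) (k₀⁻¹ • (dot2 a + (b / sphereHeight k₀ x) • dot2 x)) x := by
  unfold phase
  simp_rw [div_eq_mul_inv]
  refine (((dot2 a).hasFDerivAt.sub ((hasFDerivAt_sphereHeight hx).const_mul b)).mul_const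
    k₀⁻¹).congr_fderiv ?_
  ext <;> simp [mul_assoc]

lemma fderiv_phase_apply_e2 (a : ℝ × ℝ) (b : ℝ) (hx : x ∈ disk k₀) (j : Fin 2) :
    fderiv ℝ (phase k₀ a b) x (e2 j) =
      (proj2 j a + b * (proj2 j x / sphereHeight k₀ x)) / k₀ := by
  rw [(hasFDerivAt_phase a b hx).fderiv]
  simp only [_root_.smul_apply, _root_.add_apply, dot2_e2, smul_eq_mul]
  ring

lemma hasFDerivAt_proj2_div_sphereHeight (hx : x ∈ disk k₀) (j : Fin 2) :
    HasFDerivAt (fun y => proj2 j y / sphereHeight k₀ y)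
      ((sphereHeight k₀ x)⁻¹ • proj2 j + (proj2 j x / sphereHeight k₀ x ^ 3) • dot2 x) x := by
  have hh := (sphereHeight_pos hx).ne'
  simp_rw [div_eq_mul_inv]
  refine ((proj2 j).hasFDerivAt.mul
    ((hasDerivAt_inv hh).comp_hasFDerivAt x (hasFDerivAt_sphereHeight hx))).congr_fderiv ?_
  ext <;> simp <;> field_simp <;> ring

lemma hessian2_phase (a : ℝ × ℝ) (b : ℝ) (hx : x ∈ disk k₀) :
    hessian2 (phase k₀ a b) x = (b / (k₀ * sphereHeight k₀ x)) •
      (1 + Matrix.vecMulVec (fun j => proj2 j x / sphereHeight k₀ x)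
        (fun j => proj2 j x / sphereHeight k₀ x)) := by
  have hh := (sphereHeight_pos hx).ne'
  ext i j
  have hpartial : (fun y => fderiv ℝ (phase k₀ a b) y (e2 j)) =ᶠ[𝓝 x]
      fun y => (proj2 j a + b * (proj2 j y / sphereHeight k₀ y)) / k₀ :=
    eventually_of_mem ((isOpen_disk k₀).mem_nhds hx) fun y hy =>
      fderiv_phase_apply_e2 a b hy j
  simp_rw [div_eq_mul_inv _ k₀] at hpartial
  rw [hessian2, Matrix.of_apply, hpartial.fderiv_eq,
    ((((hasFDerivAt_proj2_div_sphereHeight hx j).const_mul b).const_add _).mul_const k₀⁻¹).fderiv]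
  simp [proj2_e2, dot2_e2, Matrix.vecMulVec_apply, -dot2_apply]
  field_simp

lemma det_hessian2_phase (a : ℝ × ℝ) (b : ℝ) (hx : x ∈ disk k₀) :
    (hessian2 (phase k₀ a b) x).det = b ^ 2 / sphereHeight k₀ x ^ 4 := by
  have hk₀ : k₀ ≠ 0 := by
    rintro rfl
    exact absurd hx.out (by nlinarith [sq_nonneg x.1, sq_nonneg x.2])
  have hh := (sphereHeight_pos hx).ne'
  rw [hessian2_phase a b hx, Matrix.det_smul, Matrix.vecMulVec_eq Unit,
    Matrix.det_one_add_replicateCol_mul_replicateRow]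
  simp [dotProduct, proj2]
  field_simp
  linear_combination b ^ 2 * sphereHeight_sq hx

end

lemma dot3_reflection_self {ν : Fin 3 → ℝ} (hν : dot3 ν ν = 1) (s : Fin 3 → ℝ) :
    dot3 (fun i => s i - 2 * dot3 ν s * ν i) (fun i => s i - 2 * dot3 ν s * ν i) = dot3 s s := by
  simp only [dot3, Fin.sum_univ_three] at hν ⊢
  linear_combination 4 * (ν 0 * s 0 + ν 1 * s 1 + ν 2 * s 2) ^ 2 * hν

/-- At the critical point `(k₁*,k₂*) = −k₀ sign(c₃)(c₁,c₂)` of the phase function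
`Ψ(k₁,k₂) = ⟨k/k₀, s⟩ − 2⟨k/k₀, ν⟩⟨ν, s⟩`, the determinant of the Hessian matrix of `Ψ`
equals `1/(c₃² k₀⁴)`, which is strictly positive. -/
theorem phase_hessian_determinant
    (k₀ : ℝ) (hk₀ : 0 < k₀)
    (ν s : Fin 3 → ℝ) (hν : dot3 ν ν = 1) (hs : dot3 s s = 1)
    (c : Fin 3 → ℝ) (hc : c = fun i => s i - 2 * dot3 ν s * ν i) (hc3 : c 2 ≠ 0)
    (kvec : ℝ × ℝ → Fin 3 → ℝ)
    (hkvec : ∀ k : ℝ × ℝ, kvec k = ![k.1, k.2, -Real.sqrt (k₀ ^ 2 - k.1 ^ 2 - k.2 ^ 2)])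
    (Ψ : ℝ × ℝ → ℝ)
    (hΨ : ∀ k : ℝ × ℝ, Ψ k =
      dot3 (fun i => kvec k i / k₀) s - 2 * dot3 (fun i => kvec k i / k₀) ν * dot3 ν s)
    (kstar : ℝ × ℝ)
    (hkstar : kstar = (-(k₀ * Real.sign (c 2)) * c 0, -(k₀ * Real.sign (c 2)) * c 1))
    (H : Matrix (Fin 2) (Fin 2) ℝ)
    (hH : H = Matrix.of fun i j : Fin 2 =>
      fderiv ℝ (fun x : ℝ × ℝ => fderiv ℝ Ψ x (e2 j)) kstar (e2 i)) :
    H.det = 1 / ((c 2) ^ 2 * k₀ ^ 4) ∧ 0 < H.det := by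
  have hc_norm : c 0 ^ 2 + c 1 ^ 2 + c 2 ^ 2 = 1 := by
    have h := dot3_reflection_self hν s
    rw [← hc, hs] at h
    simpa [dot3, Fin.sum_univ_three, sq] using h
  have hΨ_eq : Ψ = phase k₀ (c 0, c 1) (c 2) := by
    funext y
    rw [hΨ, hkvec, hc]
    simp [dot3, Fin.sum_univ_three, phase, sphereHeight]
    ring
  have hsign : Real.sign (c 2) ^ 2 = 1 := by
    rcases Real.sign_apply_eq_of_ne_zero _ hc3 with h | h <;> simp [h]
  have hheight : k₀ ^ 2 - kstar.1 ^ 2 - kstar.2 ^ 2 = k₀ ^ 2 * c 2 ^ 2 := by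
    rw [hkstar]
    linear_combination (-(k₀ ^ 2 * (c 0 ^ 2 + c 1 ^ 2))) * hsign - k₀ ^ 2 * hc_norm
  have hmem : kstar ∈ disk k₀ := show (0 : ℝ) < _ by rw [hheight]; positivity
  have hdet : H.det = 1 / (c 2 ^ 2 * k₀ ^ 4) := by
    have hsq := sphereHeight_sq hmem
    rw [hheight] at hsq
    rw [hH, ← hessian2, hΨ_eq, det_hessian2_phase _ _ hmem,
      show sphereHeight k₀ kstar ^ 4 = (sphereHeight k₀ kstar ^ 2) ^ 2 by ring, hsq]
    field_simp
  exact ⟨hdet, hdet ▸ by positivity⟩
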